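/- Let 𝒯 be the surface uv = −∏_{i=1}^{g+1}(z−λᵢ)(z−λ′ᵢ) (a conic bundle over ℙ¹ away from two points) with real structure σ(z,u,v) = (z̄, v̄, ū), where λ₁ < λ′₁ < ⋯ < λ_{g+1} < λ′_{g+1} are real. Then the real locus 𝒯^σ consists of exactly g+1 connected components, each diffeomorphic to a 2-sphere, the i-th lying over the interval [λᵢ, λ′ᵢ] ⊂ ℝP¹; moreover 𝒯^σ avoids the two singular points of 𝒯. -/

import Mathlib

/-- The real locus of the surface `uv = −∏ᵢ (z−λᵢ)(z−λ′ᵢ)` with respect to the real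
structure `σ(z,u,v) = (z̄, v̄, ū)`: the fixed points are `z ∈ ℝ`, `v = ū`,
`|u|² = −∏ᵢ (z−λᵢ)(z−λ′ᵢ)`, so the real locus is identified with the following subset of
`ℝ × ℂ` (the two singular points of `𝒯` lie over the vertex at infinity, so the real
locus is contained in the affine part). -/
def TRealLocus (g : ℕ) (lam lam' : Fin (g + 1) → ℝ) : Set (ℝ × ℂ) :=
  {p | Complex.normSq p.2 = -∏ i : Fin (g + 1), ((p.1 - lam i) * (p.1 - lam' i))}

/-- The part of the real locus lying over the closed interval `[λᵢ, λ′ᵢ] ⊂ ℝP¹`. -/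
def TRealSphere (g : ℕ) (lam lam' : Fin (g + 1) → ℝ) (i : Fin (g + 1)) : Set (ℝ × ℂ) :=
  {p ∈ TRealLocus g lam lam' | p.1 ∈ Set.Icc (lam i) (lam' i)}

/-!
Over a real point `z`, the real locus is the circle `|u|² = f z` with
`f z = -∏ⱼ (z - λⱼ)(z - λ′ⱼ)`, and `f` is positive exactly on the open intervals `(λᵢ, λ′ᵢ)` and
vanishes at their endpoints. So the locus is a disjoint union of surfaces of revolution over the
intervals `[λᵢ, λ′ᵢ]`, each pinched to a point over the endpoints. Rescaling every fibre by
`√(g z / f z)` with `g z = (z - λᵢ)(λ′ᵢ - z)`, a function with the same sign as `f` on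
`[λᵢ, λ′ᵢ]`, maps such a surface onto the round sphere `|u|² + (z - m)² = r²`; the rescaling is
continuous at the poles because the rescaled fibres have radius `√(g z) → 0`. Compact, connected and
pairwise disjoint, these spheres are the connected components of the locus.
-/

open Set Filter Topology Function

noncomputable section

def revolutionSurface (f : ℝ → ℝ) (I : Set ℝ) : Set (ℝ × ℂ) :=
  {p | Complex.normSq p.2 = f p.1 ∧ p.1 ∈ I}

def fiberRescale (f g : ℝ → ℝ) (p : ℝ × ℂ) : ℝ × ℂ :=
  (p.1, p.2 * (√(g p.1 / f p.1) : ℂ))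

section fiberRescale

variable {f g : ℝ → ℝ} {I : Set ℝ} {p : ℝ × ℂ}

lemma norm_of_mem_revolutionSurface (hp : p ∈ revolutionSurface f I) : ‖p.2‖ = √(f p.1) := by
  rw [Complex.norm_def, hp.1]

lemma norm_fiberRescale (hsign : ∀ z ∈ I, SignType.sign (f z) = SignType.sign (g z))
    (hp : p ∈ revolutionSurface f I) : ‖(fiberRescale f g p).2‖ = √(g p.1) := by
  have hs := hsign p.1 hp.2
  have hf : 0 ≤ f p.1 := hp.1 ▸ Complex.normSq_nonneg _
  rcases hf.eq_or_lt with hf0 | hfpos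
  · have hg0 : g p.1 = 0 := sign_eq_zero_iff.mp (hs ▸ sign_eq_zero_iff.mpr hf0.symm)
    simp [fiberRescale, ← hf0, hg0]
  · have hgpos : 0 < g p.1 := sign_eq_one_iff.mp (hs ▸ sign_pos hfpos)
    rw [fiberRescale, norm_mul, norm_of_mem_revolutionSurface hp, Complex.norm_real,
      Real.norm_of_nonneg (Real.sqrt_nonneg _), ← Real.sqrt_mul hf, mul_div_cancel₀ _ hfpos.ne']

lemma fiberRescale_mem (hsign : ∀ z ∈ I, SignType.sign (f z) = SignType.sign (g z))
    (hp : p ∈ revolutionSurface f I) : fiberRescale f g p ∈ revolutionSurface g I := by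
  have hg : 0 ≤ g p.1 := by
    rw [← sign_nonneg_iff, ← hsign p.1 hp.2, sign_nonneg_iff]
    exact hp.1 ▸ Complex.normSq_nonneg _
  refine ⟨?_, hp.2⟩
  rw [Complex.normSq_eq_norm_sq, norm_fiberRescale hsign hp, Real.sq_sqrt hg]
  rfl

lemma fiberRescale_fiberRescale (hsign : ∀ z ∈ I, SignType.sign (f z) = SignType.sign (g z))
    (hp : p ∈ revolutionSurface f I) : fiberRescale g f (fiberRescale f g p) = p := by
  have hs := hsign p.1 hp.2
  have hf : 0 ≤ f p.1 := hp.1 ▸ Complex.normSq_nonneg _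
  rcases hf.eq_or_lt with hf0 | hfpos
  · have hp2 : p.2 = 0 := Complex.normSq_eq_zero.mp (hp.1.trans hf0.symm)
    simp [fiberRescale, hp2, Prod.ext_iff]
  · have hgpos : 0 < g p.1 := sign_eq_one_iff.mp (hs ▸ sign_pos hfpos)
    have hone : √(g p.1 / f p.1) * √(f p.1 / g p.1) = 1 := by
      rw [← Real.sqrt_mul (div_nonneg hgpos.le hfpos.le), div_mul_div_cancel₀ hfpos.ne',
        div_self hgpos.ne', Real.sqrt_one]
    simp only [fiberRescale, mul_assoc, ← Complex.ofReal_mul, hone, Complex.ofReal_one, mul_one]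

lemma continuousOn_fiberRescale (hf : Continuous f) (hg : Continuous g)
    (hsign : ∀ z ∈ I, SignType.sign (f z) = SignType.sign (g z)) :
    ContinuousOn (fiberRescale f g) (revolutionSurface f I) := by
  intro p hp
  by_cases hf0 : f p.1 = 0
  · refine continuousWithinAt_fst.prodMk ?_
    have hg0 : g p.1 = 0 := sign_eq_zero_iff.mp (hsign p.1 hp.2 ▸ sign_eq_zero_iff.mpr hf0)
    have hp2 : p.2 = 0 := Complex.normSq_eq_zero.mp (hp.1.trans hf0)
    have hlim : Tendsto (fun q : ℝ × ℂ => √(g q.1)) (𝓝[revolutionSurface f I] p) (𝓝 0) := by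
      simpa [hg0] using ((hg.comp continuous_fst).sqrt.tendsto p).mono_left nhdsWithin_le_nhds
    show Tendsto (fun q => (fiberRescale f g q).2) _ (𝓝 (fiberRescale f g p).2)
    rw [show (fiberRescale f g p).2 = 0 by simp [fiberRescale, hp2],
      tendsto_zero_iff_norm_tendsto_zero]
    exact hlim.congr' <|
      eventually_nhdsWithin_of_forall fun q hq => (norm_fiberRescale hsign hq).symm
  · refine ContinuousAt.continuousWithinAt ?_
    unfold fiberRescale
    fun_prop (disch := exact hf0)

def revolutionSurfaceHomeomorph (hf : Continuous f) (hg : Continuous g)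
    (hsign : ∀ z ∈ I, SignType.sign (f z) = SignType.sign (g z)) :
    revolutionSurface f I ≃ₜ revolutionSurface g I where
  toFun p := ⟨fiberRescale f g p, fiberRescale_mem hsign p.2⟩
  invFun p := ⟨fiberRescale g f p, fiberRescale_mem (fun z hz => (hsign z hz).symm) p.2⟩
  left_inv p := Subtype.ext (fiberRescale_fiberRescale hsign p.2)
  right_inv p := Subtype.ext (fiberRescale_fiberRescale (fun z hz => (hsign z hz).symm) p.2)
  continuous_toFun := ((continuousOn_fiberRescale hf hg hsign).comp_continuous
    continuous_subtype_val Subtype.prop).subtype_mk _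
  continuous_invFun :=
    ((continuousOn_fiberRescale hg hf fun z hz => (hsign z hz).symm).comp_continuous
      continuous_subtype_val Subtype.prop).subtype_mk _

end fiberRescale

lemma EuclideanSpace.mem_sphere_fin_three {x : EuclideanSpace ℝ (Fin 3)} :
    x ∈ Metric.sphere 0 1 ↔ x 0 ^ 2 + x 1 ^ 2 + x 2 ^ 2 = 1 := by
  rw [EuclideanSpace.sphere_zero_eq 1 zero_le_one, mem_ofPred_eq, Fin.sum_univ_three, one_pow]

-- `(z - a) * (b - z) = r ^ 2 - (z - m) ^ 2` with `m = (a + b) / 2`, `r = (b - a) / 2`: the target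
-- is the sphere of radius `r` about `(m, 0)`.
def sphereHomeomorph {a b : ℝ} (hab : a < b) :
    Metric.sphere (0 : EuclideanSpace ℝ (Fin 3)) 1 ≃ₜ
      revolutionSurface (fun z => (z - a) * (b - z)) (Icc a b) where
  toFun x := ⟨((a + b) / 2 + (b - a) / 2 * x.1 0,
      (((b - a) / 2 * x.1 1 : ℝ) : ℂ) + (((b - a) / 2 * x.1 2 : ℝ) : ℂ) * Complex.I), by
    have hx := EuclideanSpace.mem_sphere_fin_three.mp x.2
    have h0 : |x.1 0| ≤ 1 := (sq_le_one_iff_abs_le_one _).mp (by nlinarith)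
    rw [abs_le] at h0
    refine ⟨?_, ?_, ?_⟩
    · rw [Complex.normSq_add_mul_I]
      linear_combination (b - a) ^ 2 / 4 * hx
    · nlinarith
    · nlinarith⟩
  invFun p := ⟨WithLp.toLp 2 ![(2 * p.1.1 - (a + b)) / (b - a), 2 * p.1.2.re / (b - a),
      2 * p.1.2.im / (b - a)], by
    have hp := p.2.1
    have hba : b - a ≠ 0 := sub_ne_zero.mpr hab.ne'
    rw [Complex.normSq_apply] at hp
    rw [EuclideanSpace.mem_sphere_fin_three]
    simp only [Fin.isValue, Matrix.cons_val_zero, Matrix.cons_val_one, Matrix.cons_val]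
    field_simp
    linear_combination 4 * hp⟩
  left_inv x := by
    have hba : b - a ≠ 0 := sub_ne_zero.mpr hab.ne'
    ext i
    fin_cases i <;>
      simp only [Fin.zero_eta, Fin.mk_one, Fin.reduceFinMk, Fin.isValue, Matrix.cons_val,
        Matrix.cons_val_zero, Matrix.cons_val_one, Complex.add_re, Complex.add_im,
        Complex.ofReal_re, Complex.ofReal_im, Complex.mul_I_re, Complex.mul_I_im, neg_zero,
        add_zero, zero_add] <;>
      field_simp
    ring
  right_inv p := by
    have hba : b - a ≠ 0 := sub_ne_zero.mpr hab.ne'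
    refine Subtype.ext (Prod.ext ?_ (Complex.ext ?_ ?_)) <;>
      simp only [Complex.add_re, Complex.add_im, Complex.ofReal_re, Complex.ofReal_im,
        Complex.mul_I_re, Complex.mul_I_im, neg_zero, add_zero, zero_add, Fin.isValue,
        Matrix.cons_val, Matrix.cons_val_zero, Matrix.cons_val_one] <;>
      field_simp
    ring
  continuous_toFun := by fun_prop
  continuous_invFun := by fun_prop

lemma connectedComponentIn_iUnion_eq {X ι : Type*} [TopologicalSpace X] [Finite ι]
    {S : ι → Set X} (hclosed : ∀ i, IsClosed (S i)) (hconn : ∀ i, IsPreconnected (S i))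
    (hdisj : Pairwise (Disjoint on S)) {i : ι} {x : X} (hx : x ∈ S i) :
    connectedComponentIn (⋃ j, S j) x = S i := by
  refine Subset.antisymm ?_ ((hconn i).subset_connectedComponentIn hx (subset_iUnion S i))
  set T := ⋃ j ∈ ({i}ᶜ : Set ι), S j
  have hT : IsClosed T := (Set.toFinite _).isClosed_biUnion fun j _ => hclosed j
  have hcover : (⋃ j, S j) ⊆ S i ∪ T := by
    refine iUnion_subset fun j => ?_
    rcases eq_or_ne j i with rfl | hj
    · exact subset_union_left
    · exact (subset_biUnion_of_mem (u := S) hj).trans subset_union_right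
  have hST : S i ∩ T = ∅ := by
    simp only [T, inter_iUnion₂, iUnion_eq_empty]
    exact fun j hj => (hdisj (Ne.symm hj)).inter_eq
  have hC := connectedComponentIn_subset (⋃ j, S j) x
  refine (isPreconnected_iff_subset_of_disjoint_closed.mp isPreconnected_connectedComponentIn
    _ _ (hclosed i) hT (hC.trans hcover) (by rw [hST, inter_empty])).resolve_right fun h => ?_
  have hxT := h (mem_connectedComponentIn (mem_iUnion_of_mem i hx))
  exact (eq_empty_iff_forall_notMem.mp hST) x ⟨hx, hxT⟩

instance : ConnectedSpace (Metric.sphere (0 : EuclideanSpace ℝ (Fin 3)) 1) :=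
  isConnected_iff_connectedSpace.mp <| isConnected_sphere
    (by rw [← Module.finrank_eq_rank, finrank_euclideanSpace_fin]; norm_num) 0 zero_le_one

lemma mul_sub_pos_of_notMem_Icc {a b z : ℝ} (hab : a ≤ b) (hz : z ∉ Icc a b) :
    0 < (z - a) * (z - b) := by
  rw [mem_Icc, not_and_or, not_le, not_le] at hz
  rcases hz with hz | hz
  · exact mul_pos_of_neg_of_neg (by linarith) (by linarith)
  · exact mul_pos (by linarith) (by linarith)

section TRealLocus

variable {g : ℕ} {lam lam' : Fin (g + 1) → ℝ}

lemma pairwise_disjoint_Icc (hord2 : ∀ i j : Fin (g + 1), i < j → lam' i < lam j) :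
    Pairwise (Disjoint on fun i => Icc (lam i) (lam' i)) := by
  intro i j hij
  rw [onFun, disjoint_left]
  rintro z ⟨hi, hi'⟩ ⟨hj, hj'⟩
  rcases hij.lt_or_gt with h | h
  · linarith [hord2 i j h]
  · linarith [hord2 j i h]

lemma pairwise_disjoint_TRealSphere (hord2 : ∀ i j : Fin (g + 1), i < j → lam' i < lam j) :
    Pairwise (Disjoint on TRealSphere g lam lam') := fun _ _ hij =>
  ((pairwise_disjoint_Icc hord2 hij).preimage Prod.fst).mono (fun _ hp => hp.2) fun _ hp => hp.2

lemma neg_prod_eq_mul_prod_erase (i : Fin (g + 1)) (z : ℝ) :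
    -∏ j, ((z - lam j) * (z - lam' j)) =
      (z - lam i) * (lam' i - z) * ∏ j ∈ Finset.univ.erase i, ((z - lam j) * (z - lam' j)) := by
  rw [← Finset.mul_prod_erase _ _ (Finset.mem_univ i)]
  ring

lemma sign_neg_prod_eq (hord1 : ∀ i, lam i < lam' i)
    (hord2 : ∀ i j : Fin (g + 1), i < j → lam' i < lam j) {i : Fin (g + 1)} {z : ℝ}
    (hz : z ∈ Icc (lam i) (lam' i)) :
    SignType.sign (-∏ j, ((z - lam j) * (z - lam' j))) =
      SignType.sign ((z - lam i) * (lam' i - z)) := by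
  have hrest : 0 < ∏ j ∈ Finset.univ.erase i, ((z - lam j) * (z - lam' j)) :=
    Finset.prod_pos fun j hj => mul_sub_pos_of_notMem_Icc (hord1 j).le fun hzj =>
      disjoint_left.mp (pairwise_disjoint_Icc hord2 (Finset.ne_of_mem_erase hj).symm) hz hzj
  rw [neg_prod_eq_mul_prod_erase i, sign_mul, sign_pos hrest, mul_one]

lemma TRealLocus_eq_iUnion (hord1 : ∀ i, lam i < lam' i) :
    TRealLocus g lam lam' = ⋃ i, TRealSphere g lam lam' i := by
  refine Subset.antisymm (fun p hp => ?_) (iUnion_subset fun i p hp => hp.1)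
  by_contra hnot
  have hpos : 0 < ∏ j, ((p.1 - lam j) * (p.1 - lam' j)) :=
    Finset.prod_pos fun j _ => mul_sub_pos_of_notMem_Icc (hord1 j).le fun hj =>
      hnot (mem_iUnion_of_mem j ⟨hp, hj⟩)
  have hnonneg : 0 ≤ -∏ j, ((p.1 - lam j) * (p.1 - lam' j)) := hp ▸ Complex.normSq_nonneg _
  linarith

def TRealSphereHomeomorph (hord1 : ∀ i, lam i < lam' i)
    (hord2 : ∀ i j : Fin (g + 1), i < j → lam' i < lam j) (i : Fin (g + 1)) :
    TRealSphere g lam lam' i ≃ₜ Metric.sphere (0 : EuclideanSpace ℝ (Fin 3)) 1 :=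
  (revolutionSurfaceHomeomorph (f := fun z => -∏ j, ((z - lam j) * (z - lam' j)))
      (by fun_prop) (by fun_prop) fun _ hz => sign_neg_prod_eq hord1 hord2 hz).trans
    (sphereHomeomorph (hord1 i)).symm

end TRealLocus

end

/-- Let `𝒯` be the surface `uv = −∏_{i=1}^{g+1}(z−λᵢ)(z−λ′ᵢ)` (a conic
bundle over `ℙ¹` away from two points) with real structure `σ(z,u,v) = (z̄, v̄, ū)`, where
`λ₁ < λ′₁ < ⋯ < λ_{g+1} < λ′_{g+1}` are real.  Then the real locus `𝒯^σ` consists of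
exactly `g+1` connected components, each homeomorphic to a 2-sphere, the `i`-th lying
over the interval `[λᵢ, λ′ᵢ] ⊂ ℝP¹`; moreover `𝒯^σ` is compact, hence avoids the two
singular points of `𝒯` (which lie over the vertex at infinity). -/
theorem statement_15 (g : ℕ) (lam lam' : Fin (g + 1) → ℝ)
    (hord1 : ∀ i, lam i < lam' i)
    (hord2 : ∀ i j : Fin (g + 1), i < j → lam' i < lam j) :
    (TRealLocus g lam lam' = ⋃ i, TRealSphere g lam lam' i) ∧
    (∀ i j, i ≠ j →
      Disjoint (TRealSphere g lam lam' i) (TRealSphere g lam lam' j)) ∧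
    (∀ i, (TRealSphere g lam lam' i).Nonempty) ∧
    (∀ i, ∀ p ∈ TRealSphere g lam lam' i,
      connectedComponentIn (TRealLocus g lam lam') p = TRealSphere g lam lam' i) ∧
    (∀ i, Nonempty (↥(TRealSphere g lam lam' i) ≃ₜ
      Metric.sphere (0 : EuclideanSpace ℝ (Fin 3)) 1)) ∧
    IsCompact (TRealLocus g lam lam') := by
  have hunion := TRealLocus_eq_iUnion hord1
  have hdisj := pairwise_disjoint_TRealSphere hord2
  let e := TRealSphereHomeomorph hord1 hord2
  have hcompact (i) : IsCompact (TRealSphere g lam lam' i) :=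
    isCompact_iff_compactSpace.mpr (e i).symm.compactSpace
  have hconnected (i) : IsConnected (TRealSphere g lam lam' i) :=
    isConnected_iff_connectedSpace.mpr <|
      (e i).symm.surjective.connectedSpace (e i).symm.continuous
  refine ⟨hunion, fun i j hij => hdisj hij, fun i => ?_, fun i p hp => ?_, fun i => ⟨e i⟩,
    hunion ▸ isCompact_iUnion hcompact⟩
  · exact nonempty_coe_sort.mp
      ((NormedSpace.sphere_nonempty.mpr zero_le_one).to_subtype.map (e i).symm)
  · rw [hunion]
    exact connectedComponentIn_iUnion_eq (fun j => (hcompact j).isClosed)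
      (fun j => (hconnected j).isPreconnected) hdisj hp
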